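/- Let G be a graph, U a set of k vertices of G, and suppose e = (u,v) is an edge with u,v ∈ U such that e lies in every matching of size m in G[U]. Then at most 2m - 2 edges of G[U] other than e are incident to u or v. -/

import Mathlib

/-!
Fix a size-`m` matching `M` of `G[U]` through `e = uv`. An edge `f ≠ e` that shares no vertex
with the other edges of `M` could replace `e` in `M`, so every edge at `u` or `v` other than `e`
meets one of the `m - 1` edges `ab ∈ M - e`, hence is one of `ua, ub, va, vb`. But `ua` and
`vb` cannot both be edges, since then `M - e - ab + ua + vb` is a size-`m` matching avoiding
`e`; likewise for `ub, va`. So each `ab` accounts for at most two of these edges.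
-/

namespace Finset

variable {α : Type*} [DecidableEq α]

theorem card_le_two_of_subset_of_not_both {T : Finset α} {p q p' q' : α}
    (hT : T ⊆ {p, q, p', q'}) (hpq : ¬ (p ∈ T ∧ q ∈ T)) (hpq' : ¬ (p' ∈ T ∧ q' ∈ T)) :
    #T ≤ 2 :=
  calc #T ≤ #{if p ∈ T then p else q, if p' ∈ T then p' else q'} :=
        card_le_card fun t ht => by
          have := hT ht
          simp only [mem_insert, mem_singleton] at *
          grind
    _ ≤ 2 := card_le_two

end Finset

namespace Sym2

variable {V : Type*}

def VertexDisjoint (e₁ e₂ : Sym2 V) : Prop := ∀ x, x ∈ e₁ → x ∉ e₂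

theorem VertexDisjoint.symm {e₁ e₂ : Sym2 V} (h : VertexDisjoint e₁ e₂) : VertexDisjoint e₂ e₁ :=
  fun x hx₂ hx₁ => h x hx₁ hx₂

theorem VertexDisjoint.ne {e₁ e₂ : Sym2 V} (h : VertexDisjoint e₁ e₂) : e₁ ≠ e₂ := by
  rintro rfl
  exact h _ e₁.out_fst_mem e₁.out_fst_mem

theorem VertexDisjoint.of_forall_mem_or_mem {f e g h : Sym2 V} (hf : ∀ x ∈ f, x ∈ e ∨ x ∈ g)
    (he : VertexDisjoint e h) (hg : VertexDisjoint g h) : VertexDisjoint f h := fun x hx =>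
  (hf x hx).elim (he x) (hg x)

theorem vertexDisjoint_mk_mk {a b c d : V} :
    VertexDisjoint s(a, b) s(c, d) ↔ a ≠ c ∧ a ≠ d ∧ b ≠ c ∧ b ≠ d := by
  simp [VertexDisjoint, and_assoc]

end Sym2

section Matching

open Finset Sym2

variable {V : Type*}

def IsMatching (M : Finset (Sym2 V)) : Prop := (M : Set (Sym2 V)).Pairwise VertexDisjoint

def InEveryMatching (S : Finset (Sym2 V)) (m : ℕ) (e : Sym2 V) : Prop :=
  ∀ M ⊆ S, #M = m → IsMatching M → e ∈ M

section

variable {M N : Finset (Sym2 V)} {f : Sym2 V}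

theorem IsMatching.mono (hM : IsMatching M) (hNM : N ⊆ M) : IsMatching N :=
  Set.Pairwise.mono (coe_subset.mpr hNM) hM

variable [DecidableEq V]

theorem IsMatching.insert (hM : IsMatching M) (hf : ∀ g ∈ M, VertexDisjoint f g) :
    IsMatching (insert f M) := by
  rw [IsMatching, coe_insert, Set.pairwise_insert]
  exact ⟨hM, fun g hg _ => ⟨hf g hg, (hf g hg).symm⟩⟩

theorem card_insert_of_forall_vertexDisjoint (hf : ∀ g ∈ M, VertexDisjoint f g) :
    #(insert f M) = #M + 1 :=
  card_insert_of_notMem fun hfM => (hf f hfM).ne rfl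

end

section Exchange

variable [DecidableEq V] {S M : Finset (Sym2 V)} {e : Sym2 V}
  (hall : InEveryMatching S #M e) (hMS : M ⊆ S) (hM : IsMatching M) (he : e ∈ M)
include hall hMS hM he

theorem InEveryMatching.exists_mem_erase_not_vertexDisjoint {f : Sym2 V} (hf : f ∈ S)
    (hfe : f ≠ e) : ∃ g ∈ M.erase e, ¬ VertexDisjoint f g := by
  by_contra! hdisj
  have hcard : #(insert f (M.erase e)) = #M := by
    rw [card_insert_of_forall_vertexDisjoint hdisj, card_erase_add_one he]
  have hsub : insert f (M.erase e) ⊆ S :=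
    insert_subset hf ((erase_subset e M).trans hMS)
  rcases mem_insert.mp (hall _ hsub hcard ((hM.mono (erase_subset e M)).insert hdisj))
    with hef | heM
  · exact hfe hef.symm
  · exact notMem_erase e M heM

theorem InEveryMatching.notMem_of_mem_of_swap {u v a b : V} (he_eq : e = s(u, v))
    (huv : u ≠ v) (hg : s(a, b) ∈ M) (hge : s(a, b) ≠ e) (hab : a ≠ b) (hua : s(u, a) ∈ S) :
    s(v, b) ∉ S := by
  intro hvb
  subst he_eq
  set R := (M.erase s(u, v)).erase s(a, b)
  have hRM : R ⊆ M := (erase_subset _ _).trans (erase_subset _ _)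
  have hR : ∀ h ∈ R, VertexDisjoint s(u, v) h ∧ VertexDisjoint s(a, b) h := fun h hh => by
    obtain ⟨hhg, hhe, hhM⟩ := by simpa [R] using hh
    exact ⟨hM he hhM (Ne.symm hhe), hM hg hhM (Ne.symm hhg)⟩
  obtain ⟨-, hub, hva, -⟩ := vertexDisjoint_mk_mk.mp (hM he hg hge.symm)
  have hdisj : VertexDisjoint s(u, a) s(v, b) :=
    vertexDisjoint_mk_mk.mpr ⟨huv, hub, Ne.symm hva, hab⟩
  have hua_R : ∀ h ∈ R, VertexDisjoint s(u, a) h := fun h hh =>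
    (hR h hh).1.of_forall_mem_or_mem (by simp) (hR h hh).2
  have hvb_R : ∀ h ∈ R, VertexDisjoint s(v, b) h := fun h hh =>
    (hR h hh).1.of_forall_mem_or_mem (by simp) (hR h hh).2
  have hua_vbR : ∀ h ∈ insert s(v, b) R, VertexDisjoint s(u, a) h := by
    simpa only [forall_mem_insert] using ⟨hdisj, hua_R⟩
  have hcard : #(insert s(u, a) (insert s(v, b) R)) = #M := by
    rw [card_insert_of_forall_vertexDisjoint hua_vbR, card_insert_of_forall_vertexDisjoint hvb_R,
      card_erase_of_mem (mem_erase.mpr ⟨hge, hg⟩), card_erase_of_mem he]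
    have : 2 ≤ #M := one_lt_card.mpr ⟨_, he, _, hg, hge.symm⟩
    omega
  have hsub : insert s(u, a) (insert s(v, b) R) ⊆ S :=
    insert_subset hua (insert_subset hvb (hRM.trans hMS))
  have hmatch : IsMatching (insert s(u, a) (insert s(v, b) R)) :=
    ((hM.mono hRM).insert hvb_R).insert hua_vbR
  have hmem := hall _ hsub hcard hmatch
  simp only [mem_insert, Sym2.eq_iff, R, mem_erase] at hmem
  grind

theorem InEveryMatching.card_le_two_of_forall_not_vertexDisjoint {u v : V}
    (he_eq : e = s(u, v)) (huv : u ≠ v) {g : Sym2 V} (hg : g ∈ M.erase e) (hgd : ¬ g.IsDiag)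
    {T : Finset (Sym2 V)} (hTS : T ⊆ S) (hT : ∀ f ∈ T, (u ∈ f ∨ v ∈ f) ∧ ¬ VertexDisjoint f g) :
    #T ≤ 2 := by
  induction g using Sym2.ind with | _ a b => ?_
  obtain ⟨hge, hgM⟩ := mem_erase.mp hg
  have hab : a ≠ b := fun h => hgd (mk_isDiag_iff.mpr h)
  have hTsub : T ⊆ {s(u, a), s(v, b), s(u, b), s(v, a)} := by
    intro f hf
    obtain ⟨hfuv, hfg⟩ := hT f hf
    obtain ⟨x, hxf, hxg⟩ : ∃ x ∈ f, x ∈ s(a, b) := by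
      simpa only [VertexDisjoint, not_forall, not_not, exists_prop] using hfg
    have hx_e : x ∉ e := fun hxe => hM he hgM hge.symm x hxe hxg
    have hfx : f = s(u, x) ∨ f = s(v, x) := by
      rcases hfuv with h | h
      · exact .inl ((mem_and_mem_iff (ne_of_mem_of_not_mem (by simp [he_eq]) hx_e)).mp ⟨h, hxf⟩)
      · exact .inr ((mem_and_mem_iff (ne_of_mem_of_not_mem (by simp [he_eq]) hx_e)).mp ⟨h, hxf⟩)
    rcases Sym2.mem_iff.mp hxg with rfl | rfl <;> rcases hfx with rfl | rfl <;> simp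
  refine card_le_two_of_subset_of_not_both hTsub (fun ⟨hua, hvb⟩ => ?_) (fun ⟨hub, hva⟩ => ?_)
  · exact hall.notMem_of_mem_of_swap hMS hM he he_eq huv hgM hge hab (hTS hua) (hTS hvb)
  · rw [eq_swap] at hgM hge
    exact hall.notMem_of_mem_of_swap hMS hM he he_eq huv hgM hge hab.symm (hTS hub) (hTS hva)

theorem InEveryMatching.card_filter_incident_le {u v : V} (he_eq : e = s(u, v))
    (hloop : ∀ g ∈ M, ¬ g.IsDiag) :
    #(S.filter fun f => f ≠ e ∧ (u ∈ f ∨ v ∈ f)) ≤ 2 * (#M - 1) := by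
  classical
  set F := S.filter fun f => f ≠ e ∧ (u ∈ f ∨ v ∈ f)
  have huv : u ≠ v := fun h => hloop e he (by simp [he_eq, h])
  have hcover : F ⊆ (M.erase e).biUnion fun g => F.filter (¬ VertexDisjoint · g) := by
    intro f hf
    obtain ⟨hfS, hfe, -⟩ := mem_filter.mp hf
    obtain ⟨g, hg, hfg⟩ := hall.exists_mem_erase_not_vertexDisjoint hMS hM he hfS hfe
    exact mem_biUnion.mpr ⟨g, hg, mem_filter.mpr ⟨hf, hfg⟩⟩
  have hfiber (g) (hg : g ∈ M.erase e) : #(F.filter (¬ VertexDisjoint · g)) ≤ 2 := by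
    refine hall.card_le_two_of_forall_not_vertexDisjoint hMS hM he he_eq huv hg
      (hloop g (mem_of_mem_erase hg)) ((filter_subset _ _).trans (filter_subset _ _)) ?_
    intro f hf
    obtain ⟨hfF, hfg⟩ := mem_filter.mp hf
    exact ⟨(mem_filter.mp hfF).2.2, hfg⟩
  calc #F ≤ #((M.erase e).biUnion fun g => F.filter (¬ VertexDisjoint · g)) := card_le_card hcover
    _ ≤ #(M.erase e) * 2 := card_biUnion_le_card_mul _ _ _ hfiber
    _ = 2 * (#M - 1) := by rw [card_erase_of_mem he, mul_comm]

end Exchange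

end Matching

theorem stmt_7_general {V : Type*} [Fintype V] [DecidableEq V] (G : SimpleGraph V)
    [DecidableRel G.Adj] (U : Finset V) (m : ℕ) (u v : V)
    (hex : ∃ M : Finset (Sym2 V),
      M ⊆ G.edgeFinset.filter (fun e => ∀ x ∈ e, x ∈ U) ∧
      M.card = m ∧
      ((M : Set (Sym2 V)).Pairwise fun e₁ e₂ => ∀ x, x ∈ e₁ → x ∉ e₂) ∧
      s(u, v) ∈ M)
    (hall : ∀ M : Finset (Sym2 V),
      M ⊆ G.edgeFinset.filter (fun e => ∀ x ∈ e, x ∈ U) →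
      M.card = m →
      ((M : Set (Sym2 V)).Pairwise fun e₁ e₂ => ∀ x, x ∈ e₁ → x ∉ e₂) →
      s(u, v) ∈ M) :
    ((G.edgeFinset.filter (fun e => ∀ x ∈ e, x ∈ U)).filter
        (fun e => e ≠ s(u, v) ∧ (u ∈ e ∨ v ∈ e))).card ≤ 2 * m - 2 := by
  obtain ⟨M, hMS, rfl, hM, he⟩ := hex
  have hloop : ∀ g ∈ M, ¬ g.IsDiag := fun g hg =>
    G.not_isDiag_of_mem_edgeSet (SimpleGraph.mem_edgeFinset.mp (Finset.mem_filter.mp (hMS hg)).1)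
  have := InEveryMatching.card_filter_incident_le hall hMS hM he rfl hloop
  omega

/-- If the edge `s(u,v)` of `G[U]` lies in some size-`m` matching of `G[U]` and in every
size-`m` matching of `G[U]`, then at most `2m - 2` edges of `G[U]` other than `s(u,v)`
are incident to `u` or `v`. -/
theorem stmt_7 {V : Type*} [Fintype V] [DecidableEq V] (G : SimpleGraph V)
    [DecidableRel G.Adj] (U : Finset V) (m : ℕ) (u v : V)
    (hu : u ∈ U) (hv : v ∈ U) (huv : G.Adj u v)
    (hex : ∃ M : Finset (Sym2 V),
      M ⊆ G.edgeFinset.filter (fun e => ∀ x ∈ e, x ∈ U) ∧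
      M.card = m ∧
      ((M : Set (Sym2 V)).Pairwise fun e₁ e₂ => ∀ x, x ∈ e₁ → x ∉ e₂) ∧
      s(u, v) ∈ M)
    (hall : ∀ M : Finset (Sym2 V),
      M ⊆ G.edgeFinset.filter (fun e => ∀ x ∈ e, x ∈ U) →
      M.card = m →
      ((M : Set (Sym2 V)).Pairwise fun e₁ e₂ => ∀ x, x ∈ e₁ → x ∉ e₂) →
      s(u, v) ∈ M) :
    ((G.edgeFinset.filter (fun e => ∀ x ∈ e, x ∈ U)).filter
        (fun e => e ≠ s(u, v) ∧ (u ∈ e ∨ v ∈ e))).card ≤ 2 * m - 2 :=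
  stmt_7_general G U m u v hex hall
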